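/- (Boundary acceleration estimate, time-integrated.) There exists a constant C > 0 depending only on ρ̄0, μ, λ, γ such that ∫₀ᵀ (∂_t v)(1,t)² dt ≤ C α E₁. -/

import Mathlib

open MeasureTheory Set

noncomputable section

/-- Setting for the spherically symmetric isentropic compressible Navier–Stokes
equations in Lagrangian coordinates, together with a smooth solution `(r, v)` on
`(0,1) × (0,T)` satisfying the a priori bounds. -/
structure NS where
  /-- final time -/
  T : ℝ
  hT : 0 < T
  /-- adiabatic exponent -/
  γ : ℝ
  hγ : 1 < γ
  /-- viscosity coefficient μ -/
  μ : ℝ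
  hμ : 0 < μ
  /-- viscosity coefficient λ -/
  lam : ℝ
  hlam : 0 < lam
  /-- initial density -/
  ρ0 : ℝ → ℝ
  /-- upper bound of the initial density -/
  ρbar : ℝ
  hρ0pos : ∀ x ∈ Ico (0:ℝ) 1, 0 < ρ0 x
  hρ0bd : ∀ x ∈ Icc (0:ℝ) 1, ρ0 x ≤ ρbar
  /-- `∂ₓ(ρ0^γ) ∈ L²(0,1)` -/
  hρ0L2 : IntegrableOn (fun x => (deriv (fun y => ρ0 y ^ γ) x) ^ 2) (Ioo (0:ℝ) 1)
  /-- initial velocity -/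
  u0 : ℝ → ℝ
  /-- pointwise bound for the initial velocity -/
  M : ℝ
  hM : 0 < M
  hu0M : ∀ x ∈ Icc (0:ℝ) 1, |u0 x / x| ≤ M ∧ |deriv u0 x| ≤ M
  /-- compatibility condition at `x = 1` -/
  hcompat : ρ0 1 ^ γ = (2 * μ + lam) * deriv u0 1 + 2 * lam * u0 1
  /-- Lagrangian flow map -/
  r : ℝ → ℝ → ℝ
  /-- Lagrangian velocity -/
  v : ℝ → ℝ → ℝ
  /-- a priori constant for the Jacobian -/
  α : ℝ
  hα : 1 < α
  /-- a priori constant for the velocity gradients -/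
  β : ℝ
  hβM : M ≤ β
  hr_smooth : ContDiffOn ℝ (⊤ : ℕ∞) (Function.uncurry r) (Icc (0:ℝ) 1 ×ˢ Icc 0 T)
  hv_smooth : ContDiffOn ℝ (⊤ : ℕ∞) (Function.uncurry v) (Icc (0:ℝ) 1 ×ˢ Icc 0 T)
  hr_pos : ∀ x ∈ Ioc (0:ℝ) 1, ∀ t ∈ Ioo 0 T, 0 < r x t
  /-- `v = ∂ₜ r` -/
  hv_def : ∀ x ∈ Icc (0:ℝ) 1, ∀ t ∈ Ioo 0 T, v x t = deriv (fun s => r x s) t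
  /-- the momentum equation -/
  heq : ∀ x ∈ Ioo (0:ℝ) 1, ∀ t ∈ Ioo 0 T,
    (x / r x t) ^ 2 * ρ0 x * deriv (fun s => v x s) t
      + deriv (fun y => (y ^ 2 * ρ0 y / (r y t ^ 2 * deriv (fun z => r z t) y)) ^ γ) x
    = (2 * μ + lam) *
        deriv (fun y =>
          deriv (fun z => r z t ^ 2 * v z t) y / (r y t ^ 2 * deriv (fun z => r z t) y)) x
  /-- free boundary condition at `x = 1` -/
  hbc1 : ∀ t ∈ Ioo (0:ℝ) T,
    ((1:ℝ) ^ 2 * ρ0 1 / (r 1 t ^ 2 * deriv (fun z => r z t) 1)) ^ γ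
      = (2 * μ + lam) * (deriv (fun z => v z t) 1 / deriv (fun z => r z t) 1)
        + 2 * lam * (v 1 t / r 1 t)
  /-- boundary condition at the center -/
  hbc0 : ∀ t ∈ Ioo (0:ℝ) T, r 0 t = 0
  hr_init : ∀ x ∈ Icc (0:ℝ) 1, r x 0 = x
  hv_init : ∀ x ∈ Icc (0:ℝ) 1, v x 0 = u0 x
  /-- a priori positivity of the Jacobian -/
  hjac_pos : ∀ x ∈ Ioo (0:ℝ) 1, ∀ t ∈ Ioo 0 T,
    0 < x ^ 2 / (r x t ^ 2 * deriv (fun z => r z t) x)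
  /-- a priori upper bound of the (inverse) Jacobian -/
  hjac_le : ∀ x ∈ Ioo (0:ℝ) 1, ∀ t ∈ Ioo 0 T,
    x ^ 2 / (r x t ^ 2 * deriv (fun z => r z t) x) ≤ α ^ 3
  /-- a priori bound on `v/r` -/
  hvr_le : ∀ x ∈ Ioo (0:ℝ) 1, ∀ t ∈ Ioo 0 T, |v x t / r x t| ≤ β
  /-- a priori bound on `∂ₓv/∂ₓr` -/
  hvx_le : ∀ x ∈ Ioo (0:ℝ) 1, ∀ t ∈ Ioo 0 T,
    |deriv (fun z => v z t) x / deriv (fun z => r z t) x| ≤ β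

namespace NS

variable (S : NS)

/-- `∂ₓ r` -/
def rx (x t : ℝ) : ℝ := deriv (fun y => S.r y t) x

/-- `∂ₓ v` -/
def vx (x t : ℝ) : ℝ := deriv (fun y => S.v y t) x

/-- `∂ₜ v` -/
def vt (x t : ℝ) : ℝ := deriv (fun s => S.v x s) t

/-- `∂ₓ∂ₜ v` -/
def vxt (x t : ℝ) : ℝ := deriv (fun y => S.vt y t) x

/-- `∂ₜ² v` -/
def vtt (x t : ℝ) : ℝ := deriv (fun s => S.vt x s) t

/-- `∂ₓ∂ₜ² v` -/
def vxtt (x t : ℝ) : ℝ := deriv (fun y => S.vtt y t) x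

/-- the Lagrangian density `x²ρ0/(r²∂ₓr)` -/
def dens (x t : ℝ) : ℝ := x ^ 2 * S.ρ0 x / (S.r x t ^ 2 * S.rx x t)

/-- `u1 = (1/ρ0)[(2μ+λ)∂ₓ(∂ₓ(x²u0)/x²) − ∂ₓ(ρ0^γ)]` -/
def u1 (x : ℝ) : ℝ :=
  (1 / S.ρ0 x) *
    ((2 * S.μ + S.lam) * deriv (fun y => deriv (fun z => z ^ 2 * S.u0 z) y / y ^ 2) x
      - deriv (fun y => S.ρ0 y ^ S.γ) x)

/-- `u2` -/
def u2 (x : ℝ) : ℝ :=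
  (1 / S.ρ0 x) *
    ((2 * S.μ + S.lam) * deriv (fun y => deriv (fun z => z ^ 2 * S.u1 z) y / y ^ 2) x
      + S.γ * deriv (fun y => S.ρ0 y ^ S.γ * (deriv (fun z => z ^ 2 * S.u0 z) y / y ^ 2)) x
      - (2 * S.μ + S.lam) * (deriv S.u0 x ^ 2 + 2 * S.u0 x ^ 2 / x ^ 2))
    + 2 * S.u0 x * S.u1 x / x

/-- the initial energy `𝓔₀` -/
def cE0 : ℝ :=
  (1/2) * ∫ x in Ioo (0:ℝ) 1, x ^ 2 * S.ρ0 x * S.u0 x ^ 2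
    + (1 / (S.γ - 1)) * ∫ x in Ioo (0:ℝ) 1, x ^ 2 * S.ρ0 x ^ S.γ

/-- the initial energy `𝓔₁` -/
def cE1 : ℝ := (1/2) * ∫ x in Ioo (0:ℝ) 1, x ^ 2 * S.ρ0 x * S.u1 x ^ 2

/-- the initial energy `𝓔₂` -/
def cE2 : ℝ := (1/2) * ∫ x in Ioo (0:ℝ) 1, S.ρ0 x * S.u1 x ^ 2

/-- the initial energy `𝓔₃` -/
def cE3 : ℝ := (1/2) * ∫ x in Ioo (0:ℝ) 1, x ^ 2 * S.ρ0 x * S.u2 x ^ 2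

/-- the initial energy `𝓔₄` -/
def cE4 : ℝ := (1/2) * ∫ x in Ioo (0:ℝ) 1, S.ρ0 x * S.u2 x ^ 2

/-- the modified energy `E₁ = 𝓔₁ + C₀(α^{6γ} + β²)𝓔₀` -/
def E1 (C₀ : ℝ) : ℝ := S.cE1 + C₀ * (S.α ^ (6 * S.γ) + S.β ^ 2) * S.cE0

/-- the time-differentiated energy estimate (Lemma 2 of the paper) with constant `C₀`:
`½∫ x²ρ0 (∂ₜv)² dx + μ∫₀ᵗ∫ (r²(∂ₓ∂ₜv)²/∂ₓr + 2∂ₓr(∂ₜv)²) dx ds ≤ E₁`. -/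
def TimeDiffEstimate (C₀ : ℝ) : Prop :=
  ∀ t ∈ Ioo (0:ℝ) S.T,
    (1/2) * (∫ x in Ioo (0:ℝ) 1, x ^ 2 * S.ρ0 x * S.vt x t ^ 2)
      + S.μ * ∫ s in Ioo (0:ℝ) t, ∫ x in Ioo (0:ℝ) 1,
          (S.r x s ^ 2 * S.vxt x s ^ 2 / S.rx x s + 2 * S.rx x s * S.vt x s ^ 2)
    ≤ S.E1 C₀

/-- the uniform density estimate (Lemma 5 of the paper) with modified energy `E1`
and constant `C`. -/
def DensityEstimate (E1 C : ℝ) : Prop :=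
  ∀ t ∈ Ioo (0:ℝ) S.T,
    (⨆ x ∈ Ioo (0:ℝ) 1, S.dens x t ^ S.γ)
      + C * (∫ s in Ioo (0:ℝ) t, ⨆ x ∈ Ioo (0:ℝ) 1, S.dens x s ^ (2 * S.γ))
      + C * (∫ s in Ioo (0:ℝ) t, ⨆ x ∈ Ioo (0:ℝ) 1,
          |S.vx x s / S.rx x s + 2 * S.v x s / S.r x s| ^ 2)
    ≤ S.ρbar ^ S.γ + C * S.α ^ 5 * E1 + C * S.α ^ 3 * S.cE0

/-- `Γ = min{ρ̄0 α³, (ρ̄0^γ + Cα⁵E₁ + Cα³E₀)^{1/γ}}` -/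
def Gam (E1 C : ℝ) : ℝ :=
  min (S.ρbar * S.α ^ 3)
    ((S.ρbar ^ S.γ + C * S.α ^ 5 * E1 + C * S.α ^ 3 * S.cE0) ^ (1 / S.γ))

end NS


/-! ### Auxiliary development -/

namespace NSX

variable (S : NS)

def Sset : Set (ℝ × ℝ) := Icc (0:ℝ) 1 ×ˢ Icc 0 S.T

lemma uniqueDiff : UniqueDiffOn ℝ (Sset S) :=
  (uniqueDiffOn_Icc one_pos).prod (uniqueDiffOn_Icc S.hT)

lemma interior_Sset : interior (Sset S) = Ioo (0:ℝ) 1 ×ˢ Ioo 0 S.T := by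
  rw [Sset, interior_prod_eq, interior_Icc, interior_Icc]

lemma compact_Sset : IsCompact (Sset S) := isCompact_Icc.prod isCompact_Icc

def GV : ℝ × ℝ → (ℝ × ℝ) →L[ℝ] ℝ := fderivWithin ℝ (Function.uncurry S.v) (Sset S)

lemma contDiff_GV : ContDiffOn ℝ (⊤ : ℕ∞) (GV S) (Sset S) :=
  S.hv_smooth.fderivWithin (uniqueDiff S) (by simp)

def W (p : ℝ × ℝ) : ℝ := GV S p (0, 1)

lemma contDiff_W : ContDiffOn ℝ (⊤ : ℕ∞) (W S) (Sset S) :=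
  (contDiff_GV S).clm_apply contDiffOn_const

def GW : ℝ × ℝ → (ℝ × ℝ) →L[ℝ] ℝ := fderivWithin ℝ (W S) (Sset S)

lemma cont_GW : ContinuousOn (GW S) (Sset S) :=
  (contDiff_W S).continuousOn_fderivWithin (uniqueDiff S) (by simp)

def GR : ℝ × ℝ → (ℝ × ℝ) →L[ℝ] ℝ := fderivWithin ℝ (Function.uncurry S.r) (Sset S)

lemma cont_GR : ContinuousOn (GR S) (Sset S) :=
  S.hr_smooth.continuousOn_fderivWithin (uniqueDiff S) (by simp)

def RX (x t : ℝ) : ℝ := GR S (x, t) (1, 0)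
def VT (x t : ℝ) : ℝ := W S (x, t)
def VXT (x t : ℝ) : ℝ := GW S (x, t) (1, 0)

lemma hasDerivAt_vt {x t : ℝ} (hx : x ∈ Icc (0:ℝ) 1) (ht : t ∈ Ioo 0 S.T) :
    HasDerivAt (fun s => S.v x s) (VT S x t) t := by
  have hmem : (x, t) ∈ Sset S := ⟨hx, Ioo_subset_Icc_self ht⟩
  have hF : HasFDerivWithinAt (Function.uncurry S.v) (GV S (x, t)) (Sset S) (x, t) :=
    ((S.hv_smooth.differentiableOn (by simp)) _ hmem).hasFDerivWithinAt
  have hcurve : HasDerivWithinAt (fun s : ℝ => ((x : ℝ), s)) ((0 : ℝ), (1 : ℝ)) (Icc 0 S.T) t :=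
    ((hasDerivAt_const t x).prodMk (hasDerivAt_id t)).hasDerivWithinAt
  have hmaps : MapsTo (fun s : ℝ => ((x : ℝ), s)) (Icc 0 S.T) (Sset S) := fun s hs => ⟨hx, hs⟩
  have := hF.comp_hasDerivWithinAt t hcurve hmaps
  exact this.hasDerivAt (Icc_mem_nhds ht.1 ht.2)

lemma vt_eq {x t : ℝ} (hx : x ∈ Icc (0:ℝ) 1) (ht : t ∈ Ioo 0 S.T) :
    S.vt x t = VT S x t :=
  (hasDerivAt_vt S hx ht).deriv

lemma hasDerivWithinAt_rx {x t : ℝ} (hx : x ∈ Icc (0:ℝ) 1) (ht : t ∈ Icc 0 S.T)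
    (s : Set ℝ) (hs : s ⊆ Icc (0:ℝ) 1) :
    HasDerivWithinAt (fun y => S.r y t) (RX S x t) s x := by
  have hmem : (x, t) ∈ Sset S := ⟨hx, ht⟩
  have hF : HasFDerivWithinAt (Function.uncurry S.r) (GR S (x, t)) (Sset S) (x, t) :=
    ((S.hr_smooth.differentiableOn (by simp)) _ hmem).hasFDerivWithinAt
  have hcurve : HasDerivWithinAt (fun y : ℝ => (y, t)) ((1 : ℝ), (0 : ℝ)) s x :=
    ((hasDerivAt_id x).prodMk (hasDerivAt_const x t)).hasDerivWithinAt
  have hmaps : MapsTo (fun y : ℝ => (y, t)) s (Sset S) := fun y hy => ⟨hs hy, ht⟩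
  exact hF.comp_hasDerivWithinAt x hcurve hmaps

lemma hasDerivAt_rx {x t : ℝ} (hx : x ∈ Ioo (0:ℝ) 1) (ht : t ∈ Icc 0 S.T) :
    HasDerivAt (fun y => S.r y t) (RX S x t) x :=
  (hasDerivWithinAt_rx S (Ioo_subset_Icc_self hx) ht (Icc 0 1) (subset_refl _)).hasDerivAt
    (Icc_mem_nhds hx.1 hx.2)

lemma rx_eq {x t : ℝ} (hx : x ∈ Ioo (0:ℝ) 1) (ht : t ∈ Icc 0 S.T) :
    S.rx x t = RX S x t :=
  (hasDerivAt_rx S hx ht).deriv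

lemma hasDerivWithinAt_W {x t : ℝ} (hx : x ∈ Icc (0:ℝ) 1) (ht : t ∈ Icc 0 S.T)
    (s : Set ℝ) (hs : s ⊆ Icc (0:ℝ) 1) :
    HasDerivWithinAt (fun y => VT S y t) (VXT S x t) s x := by
  have hmem : (x, t) ∈ Sset S := ⟨hx, ht⟩
  have hF : HasFDerivWithinAt (W S) (GW S (x, t)) (Sset S) (x, t) :=
    (((contDiff_W S).differentiableOn (by simp)) _ hmem).hasFDerivWithinAt
  have hcurve : HasDerivWithinAt (fun y : ℝ => (y, t)) ((1 : ℝ), (0 : ℝ)) s x :=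
    ((hasDerivAt_id x).prodMk (hasDerivAt_const x t)).hasDerivWithinAt
  have hmaps : MapsTo (fun y : ℝ => (y, t)) s (Sset S) := fun y hy => ⟨hs hy, ht⟩
  exact hF.comp_hasDerivWithinAt x hcurve hmaps

lemma hasDerivAt_W {x t : ℝ} (hx : x ∈ Ioo (0:ℝ) 1) (ht : t ∈ Icc 0 S.T) :
    HasDerivAt (fun y => VT S y t) (VXT S x t) x :=
  (hasDerivWithinAt_W S (Ioo_subset_Icc_self hx) ht (Icc 0 1) (subset_refl _)).hasDerivAt
    (Icc_mem_nhds hx.1 hx.2)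

lemma vxt_eq {x t : ℝ} (hx : x ∈ Ioo (0:ℝ) 1) (ht : t ∈ Ioo 0 S.T) :
    S.vxt x t = VXT S x t := by
  have h1 : (fun y => S.vt y t) =ᶠ[nhds x] (fun y => VT S y t) := by
    filter_upwards [Ioo_mem_nhds hx.1 hx.2] with y hy
    exact vt_eq S (Ioo_subset_Icc_self hy) ht
  rw [NS.vxt, h1.deriv_eq]
  exact (hasDerivAt_W S hx (Ioo_subset_Icc_self ht)).deriv

lemma cont_VT : ContinuousOn (W S) (Sset S) := (contDiff_W S).continuousOn

lemma cont_RXp : ContinuousOn (fun p : ℝ × ℝ => GR S p (1, 0)) (Sset S) :=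
  (ContinuousLinearMap.apply ℝ ℝ ((1:ℝ), (0:ℝ))).continuous.comp_continuousOn (cont_GR S)

lemma cont_VXTp : ContinuousOn (fun p : ℝ × ℝ => GW S p (1, 0)) (Sset S) :=
  (ContinuousLinearMap.apply ℝ ℝ ((1:ℝ), (0:ℝ))).continuous.comp_continuousOn (cont_GW S)

lemma cont_r : ContinuousOn (Function.uncurry S.r) (Sset S) := S.hr_smooth.continuousOn

/-- a uniform bound `K ≥ 1` for `r`, `RX`, `VT`, `VXT` on the compact set. -/
lemma exists_K : ∃ K : ℝ, 1 ≤ K ∧ ∀ p ∈ Sset S,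
    |Function.uncurry S.r p| ≤ K ∧ |(GR S p) (1, 0)| ≤ K ∧ |W S p| ≤ K ∧ |(GW S p) (1, 0)| ≤ K := by
  obtain ⟨K1, h1⟩ := (compact_Sset S).exists_bound_of_continuousOn (cont_r S)
  obtain ⟨K2, h2⟩ := (compact_Sset S).exists_bound_of_continuousOn (cont_RXp S)
  obtain ⟨K3, h3⟩ := (compact_Sset S).exists_bound_of_continuousOn (cont_VT S)
  obtain ⟨K4, h4⟩ := (compact_Sset S).exists_bound_of_continuousOn (cont_VXTp S)
  refine ⟨max 1 (max (max K1 K2) (max K3 K4)), le_max_left _ _, fun p hp => ?_⟩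
  have e1 := h1 p hp; have e2 := h2 p hp; have e3 := h3 p hp; have e4 := h4 p hp
  simp only [Real.norm_eq_abs] at e1 e2 e3 e4
  refine ⟨?_, ?_, ?_, ?_⟩ <;>
    [exact le_trans e1 (by simp [le_max_iff]);
     exact le_trans e2 (by simp [le_max_iff]);
     exact le_trans e3 (by simp [le_max_iff]);
     exact le_trans e4 (by simp [le_max_iff])]

/-- positivity of `r² rₓ` and the lower bound `x² ≤ α³ r² rₓ` at interior points. -/
lemma jac_facts {x t : ℝ} (hx : x ∈ Ioo (0:ℝ) 1) (ht : t ∈ Ioo 0 S.T) :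
    0 < S.rx x t ∧ x ^ 2 ≤ S.α ^ 3 * (S.r x t ^ 2 * S.rx x t) := by
  have hrpos : 0 < S.r x t := S.hr_pos x ⟨hx.1, hx.2.le⟩ t ht
  have hpos := S.hjac_pos x hx t ht
  have hle := S.hjac_le x hx t ht
  have hdef : deriv (fun z => S.r z t) x = S.rx x t := rfl
  rw [hdef] at hpos hle
  have hd : 0 < S.r x t ^ 2 * S.rx x t := by
    rcases lt_trichotomy (S.r x t ^ 2 * S.rx x t) 0 with hlt | heq | hgt
    · exact absurd hpos (not_lt.2 (le_of_lt (div_neg_of_pos_of_neg (pow_pos hx.1 2) hlt)))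
    · rw [heq, div_zero] at hpos; exact absurd hpos (lt_irrefl 0)
    · exact hgt
  refine ⟨?_, ?_⟩
  · nlinarith [pow_pos hrpos 2, hd]
  · rw [div_le_iff₀ hd] at hle; linarith

lemma rx_pos {x t : ℝ} (hx : x ∈ Ioo (0:ℝ) 1) (ht : t ∈ Ioo 0 S.T) :
    0 < S.rx x t := (jac_facts S hx ht).1

/-- linear growth bound `|r x t| ≤ K x`. -/
lemma r_le_Kx {K : ℝ} (hK : ∀ p ∈ Sset S, |(GR S p) (1, 0)| ≤ K)
    {x t : ℝ} (hx : x ∈ Icc (0:ℝ) 1) (ht : t ∈ Ioo 0 S.T) :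
    |S.r x t| ≤ K * x := by
  have htI : t ∈ Icc 0 S.T := Ioo_subset_Icc_self ht
  have hder : ∀ y ∈ Icc (0:ℝ) 1, HasDerivWithinAt (fun z => S.r z t) (RX S y t) (Icc 0 1) y :=
    fun y hy => hasDerivWithinAt_rx S hy htI _ (subset_refl _)
  have hbd : ∀ y ∈ Icc (0:ℝ) 1, ‖RX S y t‖ ≤ K := fun y hy => hK (y, t) ⟨hy, htI⟩
  have := Convex.norm_image_sub_le_of_norm_hasDerivWithin_le hder hbd (convex_Icc 0 1)
      (left_mem_Icc.2 zero_le_one) hx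
  rw [S.hbc0 t ht, sub_zero] at this
  simpa [abs_of_nonneg hx.1] using this

/-- the uniform positive lower bound `c = 1/(α³K²)` on `rₓ`. -/
lemma rx_ge {K : ℝ} (hK1 : 1 ≤ K) (hK : ∀ p ∈ Sset S, |(GR S p) (1, 0)| ≤ K)
    {x t : ℝ} (hx : x ∈ Ioo (0:ℝ) 1) (ht : t ∈ Ioo 0 S.T) :
    1 / (S.α ^ 3 * K ^ 2) ≤ S.rx x t := by
  obtain ⟨hrx, hjac⟩ := jac_facts S hx ht
  have hr := r_le_Kx S hK (Ioo_subset_Icc_self hx) ht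
  have hα : (0:ℝ) < S.α := lt_trans one_pos S.hα
  have hxpos : 0 < x := hx.1
  have hr2 : S.r x t ^ 2 ≤ K ^ 2 * x ^ 2 := by nlinarith [abs_nonneg (S.r x t), sq_abs (S.r x t)]
  -- from x² ≤ α³ r² rx ≤ α³ K² x² rx conclude 1 ≤ α³ K² rx
  have key : 1 ≤ S.α ^ 3 * K ^ 2 * S.rx x t := by
    have hstep : S.α ^ 3 * S.rx x t * S.r x t ^ 2 ≤ S.α ^ 3 * S.rx x t * (K ^ 2 * x ^ 2) :=
      mul_le_mul_of_nonneg_left hr2 (by positivity)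
    nlinarith [mul_pos hxpos hxpos, hjac, hstep]
  rw [div_le_iff₀ (by positivity)]
  linarith [key]

/-- continuity of `x ↦ r x t` on `[0,1]`. -/
lemma cont_r_x {t : ℝ} (htI : t ∈ Icc 0 S.T) :
    ContinuousOn (fun x => S.r x t) (Icc (0:ℝ) 1) :=
  (cont_r S).comp ((continuous_id.prodMk continuous_const).continuousOn)
    (fun y hy => ⟨hy, htI⟩)

/-- monotonicity of `r` in `x`. -/
lemma r_mono {t : ℝ} (ht : t ∈ Ioo 0 S.T) :
    MonotoneOn (fun x => S.r x t) (Icc (0:ℝ) 1) := by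
  have htI : t ∈ Icc 0 S.T := Ioo_subset_Icc_self ht
  refine monotoneOn_of_deriv_nonneg (convex_Icc 0 1) (cont_r_x S htI) ?_ ?_
  · rw [interior_Icc]
    exact fun y hy => (hasDerivAt_rx S hy htI).differentiableAt.differentiableWithinAt
  · rw [interior_Icc]
    intro y hy
    rw [(hasDerivAt_rx S hy htI).deriv, ← rx_eq S hy htI]
    exact (rx_pos S hy ht).le

/-- lower bound `1/α ≤ r(1,t)`. -/
lemma r1_ge {t : ℝ} (ht : t ∈ Ioo 0 S.T) : 1 / S.α ≤ S.r 1 t := by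
  have htI : t ∈ Icc 0 S.T := Ioo_subset_Icc_self ht
  have hα : (0:ℝ) < S.α := lt_trans one_pos S.hα
  have hder : ∀ y ∈ Ioo (0:ℝ) 1, HasDerivAt (fun x => S.r x t ^ 3 - x ^ 3 / S.α ^ 3)
      (3 * S.r y t ^ 2 * RX S y t - 3 * y ^ 2 / S.α ^ 3) y := by
    intro y hy
    have h1 : HasDerivAt (fun x => S.r x t ^ 3)
        ((3 : ℕ) * S.r y t ^ 2 * RX S y t) y := (hasDerivAt_rx S hy htI).pow 3
    have h2 : HasDerivAt (fun x : ℝ => x ^ 3 / S.α ^ 3)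
        (((3 : ℕ) * y ^ 2) / S.α ^ 3) y := (hasDerivAt_pow 3 y).div_const _
    have := h1.sub h2
    exact this.congr_deriv (by push_cast; ring)
  have hmono : MonotoneOn (fun x => S.r x t ^ 3 - x ^ 3 / S.α ^ 3) (Icc (0:ℝ) 1) := by
    refine monotoneOn_of_deriv_nonneg (convex_Icc 0 1)
      (((cont_r_x S htI).pow 3).sub ((continuous_id.pow 3).div_const _).continuousOn) ?_ ?_
    · rw [interior_Icc]
      exact fun y hy => (hder y hy).differentiableAt.differentiableWithinAt
    · rw [interior_Icc]
      intro y hy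
      rw [(hder y hy).deriv]
      obtain ⟨hrx, hjac⟩ := jac_facts S hy ht
      rw [rx_eq S hy htI] at hjac
      have h3 : 3 * y ^ 2 / S.α ^ 3 ≤ 3 * S.r y t ^ 2 * RX S y t := by
        rw [div_le_iff₀ (by positivity)]
        nlinarith [hjac]
      linarith [h3]
  have h1 := hmono (left_mem_Icc.2 zero_le_one) (right_mem_Icc.2 zero_le_one) zero_le_one
  have h0 : S.r 0 t ^ 3 - (0:ℝ) ^ 3 / S.α ^ 3 = 0 := by rw [S.hbc0 t ht]; norm_num
  have hr1 : 0 < S.r 1 t := S.hr_pos 1 (right_mem_Ioc.2 one_pos) t ht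
  have h1' : S.r 0 t ^ 3 - (0:ℝ) ^ 3 / S.α ^ 3 ≤ S.r 1 t ^ 3 - (1:ℝ) ^ 3 / S.α ^ 3 := h1
  have hcube : (1 / S.α) ^ 3 ≤ S.r 1 t ^ 3 := by
    rw [h0] at h1' 
    rw [div_pow, one_pow]
    nlinarith [h1']
  exact le_of_pow_le_pow_left₀ (n := 3) (by norm_num) hr1.le hcube

/-- continuous version of the dissipation integrand. -/
def DISS (x t : ℝ) : ℝ :=
  S.r x t ^ 2 * VXT S x t ^ 2 / RX S x t + 2 * RX S x t * VT S x t ^ 2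

lemma DISS_eq {x t : ℝ} (hx : x ∈ Ioo (0:ℝ) 1) (ht : t ∈ Ioo 0 S.T) :
    S.r x t ^ 2 * S.vxt x t ^ 2 / S.rx x t + 2 * S.rx x t * S.vt x t ^ 2 = DISS S x t := by
  rw [DISS, rx_eq S hx (Ioo_subset_Icc_self ht), vt_eq S (Ioo_subset_Icc_self hx) ht,
    vxt_eq S hx ht]

lemma RX_pos {x t : ℝ} (hx : x ∈ Ioo (0:ℝ) 1) (ht : t ∈ Ioo 0 S.T) :
    0 < RX S x t := by
  rw [← rx_eq S hx (Ioo_subset_Icc_self ht)]; exact rx_pos S hx ht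

lemma DISS_nonneg {x t : ℝ} (hx : x ∈ Ioo (0:ℝ) 1) (ht : t ∈ Ioo 0 S.T) :
    0 ≤ DISS S x t := by
  have h := RX_pos S hx ht
  rw [DISS]
  positivity

/-- generic integrability of bounded continuous functions on `Ioo`. -/
lemma integrableOn_Ioo_of_bound {f : ℝ → ℝ} {a b C : ℝ} (hm : ContinuousOn f (Ioo a b))
    (hb : ∀ x ∈ Ioo a b, |f x| ≤ C) : IntegrableOn f (Ioo a b) := by
  refine ⟨hm.aestronglyMeasurable measurableSet_Ioo,
    HasFiniteIntegral.restrict_of_bounded (C := C) measure_Ioo_lt_top ?_⟩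
  exact (ae_restrict_iff' measurableSet_Ioo).2 (ae_of_all _ fun x hx => by
    simpa [Real.norm_eq_abs] using hb x hx)

lemma cont_DISS_x {t : ℝ} (ht : t ∈ Ioo 0 S.T) :
    ContinuousOn (fun x => DISS S x t) (Ioo (0:ℝ) 1) := by
  have htI : t ∈ Icc 0 S.T := Ioo_subset_Icc_self ht
  have hsub : ∀ y ∈ Ioo (0:ℝ) 1, ((y : ℝ), t) ∈ Sset S :=
    fun y hy => ⟨Ioo_subset_Icc_self hy, htI⟩
  have hcurve : ContinuousOn (fun y : ℝ => ((y : ℝ), t)) (Ioo (0:ℝ) 1) :=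
    (continuous_id.prodMk continuous_const).continuousOn
  have hr : ContinuousOn (fun x => S.r x t) (Ioo (0:ℝ) 1) := (cont_r S).comp hcurve hsub
  have hRX : ContinuousOn (fun x => RX S x t) (Ioo (0:ℝ) 1) := (cont_RXp S).comp hcurve hsub
  have hVT : ContinuousOn (fun x => VT S x t) (Ioo (0:ℝ) 1) := (cont_VT S).comp hcurve hsub
  have hVXT : ContinuousOn (fun x => VXT S x t) (Ioo (0:ℝ) 1) := (cont_VXTp S).comp hcurve hsub
  exact (((hr.pow 2).mul (hVXT.pow 2)).div hRX
    (fun x hx => (RX_pos S hx ht).ne')).add ((continuousOn_const.mul hRX).mul (hVT.pow 2))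


lemma sq_le_of_abs_le {a K : ℝ} (h : |a| ≤ K) : a ^ 2 ≤ K ^ 2 := by
  nlinarith [sq_abs a, abs_nonneg a]

/-- uniform bound for `DISS`. -/
lemma DISS_bound {K : ℝ} (hK1 : 1 ≤ K)
    (hK : ∀ p ∈ Sset S, |Function.uncurry S.r p| ≤ K ∧ |(GR S p) (1, 0)| ≤ K ∧
      |W S p| ≤ K ∧ |(GW S p) (1, 0)| ≤ K)
    {x t : ℝ} (hx : x ∈ Ioo (0:ℝ) 1) (ht : t ∈ Ioo 0 S.T) :
    |DISS S x t| ≤ S.α ^ 3 * K ^ 6 + 2 * K ^ 3 := by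
  have hmem : ((x : ℝ), t) ∈ Sset S := ⟨Ioo_subset_Icc_self hx, Ioo_subset_Icc_self ht⟩
  obtain ⟨hr0, hRX0, hVT0, hVXT0⟩ := hK _ hmem
  have hr : |S.r x t| ≤ K := hr0
  have hRX : |RX S x t| ≤ K := hRX0
  have hVT : |VT S x t| ≤ K := hVT0
  have hVXT : |VXT S x t| ≤ K := hVXT0
  have hRXpos := RX_pos S hx ht
  have hα : (0:ℝ) < S.α := lt_trans one_pos S.hα
  have hc : 1 / (S.α ^ 3 * K ^ 2) ≤ RX S x t := by
    rw [← rx_eq S hx (Ioo_subset_Icc_self ht)]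
    exact rx_ge S hK1 (fun p hp => (hK p hp).2.1) hx ht
  have hinv : 1 / RX S x t ≤ S.α ^ 3 * K ^ 2 := by
    rw [div_le_iff₀ hRXpos]
    rw [div_le_iff₀ (by positivity)] at hc
    nlinarith [hc]
  have h1 : S.r x t ^ 2 * VXT S x t ^ 2 / RX S x t ≤ S.α ^ 3 * K ^ 6 := by
    have hnum : S.r x t ^ 2 * VXT S x t ^ 2 ≤ K ^ 2 * K ^ 2 := by
      have e1 : S.r x t ^ 2 ≤ K ^ 2 := sq_le_of_abs_le hr
      have e2 : VXT S x t ^ 2 ≤ K ^ 2 := sq_le_of_abs_le hVXT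
      nlinarith [sq_nonneg (S.r x t), sq_nonneg (VXT S x t)]
    rw [div_le_iff₀ hRXpos]
    calc S.r x t ^ 2 * VXT S x t ^ 2 ≤ K ^ 4 := by nlinarith [hnum]
    _ ≤ S.α ^ 3 * K ^ 6 * RX S x t := by
        rw [div_le_iff₀ (by positivity)] at hc
        nlinarith [hc, pow_nonneg (le_trans zero_le_one hK1) 4]
  have h2 : 2 * RX S x t * VT S x t ^ 2 ≤ 2 * K ^ 3 := by
    have e2 : VT S x t ^ 2 ≤ K ^ 2 := sq_le_of_abs_le hVT
    have e3 : RX S x t ≤ K := le_trans (le_abs_self _) hRX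
    nlinarith [hRXpos, e2, e3, pow_nonneg (le_trans zero_le_one hK1) 2]
  have hnn : 0 ≤ DISS S x t := DISS_nonneg S hx ht
  rw [abs_of_nonneg hnn, DISS]
  linarith [h1, h2]

lemma integrable_DISS {K : ℝ} (hK1 : 1 ≤ K)
    (hK : ∀ p ∈ Sset S, |Function.uncurry S.r p| ≤ K ∧ |(GR S p) (1, 0)| ≤ K ∧
      |W S p| ≤ K ∧ |(GW S p) (1, 0)| ≤ K)
    {t : ℝ} (ht : t ∈ Ioo 0 S.T) :
    IntegrableOn (fun x => DISS S x t) (Ioo (0:ℝ) 1) :=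
  integrableOn_Ioo_of_bound (cont_DISS_x S ht) (fun x hx => DISS_bound S hK1 hK hx ht)

/-- `g t = ∫₀¹ DISS dx`. -/
def gg (t : ℝ) : ℝ := ∫ x in Ioo (0:ℝ) 1, DISS S x t

lemma gg_nonneg {t : ℝ} (ht : t ∈ Ioo 0 S.T) : 0 ≤ gg S t :=
  setIntegral_nonneg measurableSet_Ioo (fun x hx => DISS_nonneg S hx ht)

/-- the boundary estimate at fixed time: `VT(1,t)² ≤ 2α g(t)`. -/
lemma pointwise_bd {K : ℝ} (hK1 : 1 ≤ K)
    (hK : ∀ p ∈ Sset S, |Function.uncurry S.r p| ≤ K ∧ |(GR S p) (1, 0)| ≤ K ∧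
      |W S p| ≤ K ∧ |(GW S p) (1, 0)| ≤ K)
    {t : ℝ} (ht : t ∈ Ioo 0 S.T) :
    VT S 1 t ^ 2 ≤ 2 * S.α * gg S t := by
  have htI : t ∈ Icc 0 S.T := Ioo_subset_Icc_self ht
  have hα : (0:ℝ) < S.α := lt_trans one_pos S.hα
  set F' : ℝ → ℝ := fun x => 3 * S.r x t ^ 2 * RX S x t * VT S x t ^ 2
      + S.r x t ^ 3 * (2 * VT S x t * VXT S x t) with hF'
  -- derivative of F = r³ VT²
  have hder : ∀ x ∈ Ioo (0:ℝ) 1,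
      HasDerivAt (fun y => S.r y t ^ 3 * VT S y t ^ 2) (F' x) x := by
    intro x hx
    have h1 : HasDerivAt (fun y => S.r y t ^ 3) ((3:ℕ) * S.r x t ^ 2 * RX S x t) x :=
      (hasDerivAt_rx S hx htI).pow 3
    have h2 := (hasDerivAt_W S hx htI).pow 2
    have h3 := h1.mul h2
    exact h3.congr_deriv (by simp only [hF', Pi.pow_apply]; push_cast; ring)
  -- continuity of F
  have hcurve : ContinuousOn (fun y : ℝ => ((y : ℝ), t)) (Icc (0:ℝ) 1) :=
    (continuous_id.prodMk continuous_const).continuousOn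
  have hsub : ∀ y ∈ Icc (0:ℝ) 1, ((y : ℝ), t) ∈ Sset S := fun y hy => ⟨hy, htI⟩
  have hVTc : ContinuousOn (fun x => VT S x t) (Icc (0:ℝ) 1) := (cont_VT S).comp hcurve hsub
  have hFc : ContinuousOn (fun y => S.r y t ^ 3 * VT S y t ^ 2) (Icc (0:ℝ) 1) :=
    ((cont_r_x S htI).pow 3).mul (hVTc.pow 2)
  -- bound on F' by the dissipation
  have hr1pos : 0 < S.r 1 t := S.hr_pos 1 (right_mem_Ioc.2 one_pos) t ht
  have hFbd : ∀ x ∈ Ioo (0:ℝ) 1, F' x ≤ 2 * S.r 1 t ^ 2 * DISS S x t := by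
    intro x hx
    have hrpos : 0 < S.r x t := S.hr_pos x ⟨hx.1, hx.2.le⟩ t ht
    have hrle : S.r x t ≤ S.r 1 t :=
      r_mono S ht (Ioo_subset_Icc_self hx) (right_mem_Icc.2 zero_le_one) hx.2.le
    have hRXpos := RX_pos S hx ht
    rw [hF', DISS]
    have key : S.r x t ^ 3 * (2 * VT S x t * VXT S x t) ≤
        S.r x t ^ 2 * RX S x t * VT S x t ^ 2
          + S.r 1 t ^ 2 * (S.r x t ^ 2 * VXT S x t ^ 2 / RX S x t) := by
      have hDP2 : S.r 1 t ^ 2 * (S.r x t ^ 2 * VXT S x t ^ 2 / RX S x t) * RX S x t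
          = S.r 1 t ^ 2 * (S.r x t ^ 2 * VXT S x t ^ 2) := by
        field_simp
      have claim : S.r x t ^ 3 * (2 * VT S x t * VXT S x t) * RX S x t ≤
          S.r x t ^ 2 * RX S x t ^ 2 * VT S x t ^ 2
            + S.r 1 t ^ 2 * (S.r x t ^ 2 * VXT S x t ^ 2) := by
        nlinarith [sq_nonneg (S.r x t * RX S x t * VT S x t - S.r x t ^ 2 * VXT S x t),
          mul_le_mul hrle hrle hrpos.le hr1pos.le,
          sq_nonneg (S.r x t * VXT S x t), hrpos, hRXpos]
      nlinarith [claim, hDP2, hRXpos]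
    have hterm1 : 3 * S.r x t ^ 2 * RX S x t * VT S x t ^ 2 ≤
        3 * S.r 1 t ^ 2 * (RX S x t * VT S x t ^ 2) := by
      nlinarith [mul_nonneg hRXpos.le (sq_nonneg (VT S x t)), hrpos, hrle,
        mul_le_mul hrle hrle hrpos.le hr1pos.le]
    have ht2 : S.r x t ^ 2 * RX S x t * VT S x t ^ 2 ≤
        S.r 1 t ^ 2 * (RX S x t * VT S x t ^ 2) := by
      nlinarith [mul_nonneg hRXpos.le (sq_nonneg (VT S x t)), hrpos, hrle,
        mul_le_mul hrle hrle hrpos.le hr1pos.le]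
    have hnn2 : 0 ≤ S.r 1 t ^ 2 * (S.r x t ^ 2 * VXT S x t ^ 2 / RX S x t) := by positivity
    have expand : 2 * S.r 1 t ^ 2 * (S.r x t ^ 2 * VXT S x t ^ 2 / RX S x t
          + 2 * RX S x t * VT S x t ^ 2)
        = 4 * (S.r 1 t ^ 2 * (RX S x t * VT S x t ^ 2))
          + 2 * (S.r 1 t ^ 2 * (S.r x t ^ 2 * VXT S x t ^ 2 / RX S x t)) := by ring
    linarith [key, hterm1, ht2, hnn2, expand]
  -- integrability of F'
  have hFint : IntegrableOn F' (Ioo (0:ℝ) 1) := by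
    have hc : ContinuousOn F' (Ioo (0:ℝ) 1) := by
      have hsub' : ∀ y ∈ Ioo (0:ℝ) 1, ((y : ℝ), t) ∈ Sset S :=
        fun y hy => ⟨Ioo_subset_Icc_self hy, htI⟩
      have hcurve' : ContinuousOn (fun y : ℝ => ((y : ℝ), t)) (Ioo (0:ℝ) 1) :=
        (continuous_id.prodMk continuous_const).continuousOn
      have hr : ContinuousOn (fun x => S.r x t) (Ioo (0:ℝ) 1) := (cont_r S).comp hcurve' hsub'
      have hRX : ContinuousOn (fun x => RX S x t) (Ioo (0:ℝ) 1) := (cont_RXp S).comp hcurve' hsub'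
      have hVT : ContinuousOn (fun x => VT S x t) (Ioo (0:ℝ) 1) := (cont_VT S).comp hcurve' hsub'
      have hVXT : ContinuousOn (fun x => VXT S x t) (Ioo (0:ℝ) 1) :=
        (cont_VXTp S).comp hcurve' hsub'
      exact (((continuousOn_const.mul (hr.pow 2)).mul hRX).mul (hVT.pow 2)).add
        ((hr.pow 3).mul ((continuousOn_const.mul hVT).mul hVXT))
    refine integrableOn_Ioo_of_bound hc (C := 5 * K ^ 5) ?_
    intro x hx
    obtain ⟨hr1, hRX1, hVT1, hVXT1⟩ := hK (x, t) ⟨Ioo_subset_Icc_self hx, htI⟩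
    have hr : |S.r x t| ≤ K := hr1
    have hRX : |RX S x t| ≤ K := hRX1
    have hVT : |VT S x t| ≤ K := hVT1
    have hVXT : |VXT S x t| ≤ K := hVXT1
    have hK0 : (0:ℝ) ≤ K := le_trans zero_le_one hK1
    rw [hF']
    have b1 : |3 * S.r x t ^ 2 * RX S x t * VT S x t ^ 2| ≤ 3 * K ^ 5 := by
      calc |3 * S.r x t ^ 2 * RX S x t * VT S x t ^ 2|
          = 3 * |S.r x t| ^ 2 * |RX S x t| * |VT S x t| ^ 2 := by
            rw [abs_mul, abs_mul, abs_mul, abs_pow, abs_pow]; norm_num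
        _ ≤ 3 * K ^ 2 * K * K ^ 2 := by gcongr <;> first | assumption | positivity
        _ = 3 * K ^ 5 := by ring
    have b2 : |S.r x t ^ 3 * (2 * VT S x t * VXT S x t)| ≤ 2 * K ^ 5 := by
      calc |S.r x t ^ 3 * (2 * VT S x t * VXT S x t)|
          = |S.r x t| ^ 3 * (2 * |VT S x t| * |VXT S x t|) := by
            rw [abs_mul, abs_mul, abs_mul, abs_pow]; norm_num
        _ ≤ K ^ 3 * (2 * K * K) := by gcongr <;> first | assumption | positivity
        _ = 2 * K ^ 5 := by ring
    calc |3 * S.r x t ^ 2 * RX S x t * VT S x t ^ 2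
          + S.r x t ^ 3 * (2 * VT S x t * VXT S x t)|
        ≤ 3 * K ^ 5 + 2 * K ^ 5 := le_trans (abs_add_le _ _) (by linarith [b1, b2])
      _ ≤ 5 * K ^ 5 := by linarith
  -- FTC
  have hftc : ∫ y in (0:ℝ)..1, F' y = S.r 1 t ^ 3 * VT S 1 t ^ 2 := by
    rw [intervalIntegral.integral_eq_sub_of_hasDeriv_right_of_le zero_le_one hFc
      (fun x hx => (hder x hx).hasDerivWithinAt)
      ((intervalIntegrable_iff_integrableOn_Ioo_of_le zero_le_one).2 hFint)]
    rw [S.hbc0 t ht]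
    ring
  have hval : S.r 1 t ^ 3 * VT S 1 t ^ 2 = ∫ x in Ioo (0:ℝ) 1, F' x := by
    rw [← hftc, intervalIntegral.integral_of_le zero_le_one, integral_Ioc_eq_integral_Ioo]
  -- compare with dissipation integral
  have hcomp : (∫ x in Ioo (0:ℝ) 1, F' x) ≤ 2 * S.r 1 t ^ 2 * gg S t := by
    have := setIntegral_mono_on hFint
      (((integrable_DISS S hK1 hK ht).const_mul (2 * S.r 1 t ^ 2))) measurableSet_Ioo
      (fun x hx => hFbd x hx)
    simpa [gg, integral_const_mul] using this
  have hr1ge : 1 / S.α ≤ S.r 1 t := r1_ge S ht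
  have hgnn : 0 ≤ gg S t := gg_nonneg S ht
  have hkey : S.r 1 t ^ 3 * VT S 1 t ^ 2 ≤ 2 * S.r 1 t ^ 2 * gg S t := hval ▸ hcomp
  -- conclude
  have hαr : 1 ≤ S.α * S.r 1 t := by
    rw [div_le_iff₀ hα] at hr1ge; linarith [hr1ge]
  nlinarith [hkey, mul_pos (mul_pos hr1pos hr1pos) hr1pos, sq_nonneg (VT S 1 t),
    mul_nonneg (mul_nonneg hgnn hr1pos.le) hr1pos.le,
    mul_le_mul_of_nonneg_left hαr (mul_nonneg (mul_nonneg (by linarith : (0:ℝ) ≤ 2) hgnn)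
      (mul_nonneg hr1pos.le hr1pos.le))]

lemma gg_bound {K : ℝ} (hK1 : 1 ≤ K)
    (hK : ∀ p ∈ Sset S, |Function.uncurry S.r p| ≤ K ∧ |(GR S p) (1, 0)| ≤ K ∧
      |W S p| ≤ K ∧ |(GW S p) (1, 0)| ≤ K)
    {t : ℝ} (ht : t ∈ Ioo 0 S.T) : |gg S t| ≤ S.α ^ 3 * K ^ 6 + 2 * K ^ 3 := by
  have h := norm_setIntegral_le_of_norm_le_const (μ := volume) (s := Ioo (0:ℝ) 1)
    (f := fun x => DISS S x t) (C := S.α ^ 3 * K ^ 6 + 2 * K ^ 3) measure_Ioo_lt_top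
    (fun x hx => by simpa [Real.norm_eq_abs] using DISS_bound S hK1 hK hx ht)
  simpa [gg, Real.norm_eq_abs, Real.volume_real_Ioo] using h

lemma cont_gg : ContinuousOn (gg S) (Ioo 0 S.T) := by
  obtain ⟨K, hK1, hK⟩ := exists_K S
  intro t0 ht0
  apply ContinuousAt.continuousWithinAt
  refine continuousAt_of_dominated (bound := fun _ => S.α ^ 3 * K ^ 6 + 2 * K ^ 3) ?_ ?_ ?_ ?_
  · filter_upwards [Ioo_mem_nhds ht0.1 ht0.2] with t htm
    exact (cont_DISS_x S htm).aestronglyMeasurable measurableSet_Ioo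
  · filter_upwards [Ioo_mem_nhds ht0.1 ht0.2] with t htm
    refine (ae_restrict_iff' measurableSet_Ioo).2 (ae_of_all _ fun x hx => ?_)
    simpa [Real.norm_eq_abs] using DISS_bound S hK1 hK hx htm
  · exact integrableOn_const measure_Ioo_lt_top.ne
  · refine (ae_restrict_iff' measurableSet_Ioo).2 (ae_of_all _ fun x hx => ?_)
    have hnh : Sset S ∈ nhds ((x : ℝ), t0) :=
      mem_interior_iff_mem_nhds.1 (by rw [interior_Sset]; exact ⟨hx, ht0⟩)
    have curve : ContinuousAt (fun t : ℝ => ((x : ℝ), t)) t0 :=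
      (continuous_const.prodMk continuous_id).continuousAt
    have c1 : ContinuousAt (fun t => S.r x t) t0 := ((cont_r S).continuousAt hnh).comp curve
    have c2 : ContinuousAt (fun t => RX S x t) t0 := ((cont_RXp S).continuousAt hnh).comp curve
    have c3 : ContinuousAt (fun t => VT S x t) t0 := ((cont_VT S).continuousAt hnh).comp curve
    have c4 : ContinuousAt (fun t => VXT S x t) t0 := ((cont_VXTp S).continuousAt hnh).comp curve
    have hne : RX S x t0 ≠ 0 := (RX_pos S hx ht0).ne'
    exact (((c1.pow 2).mul (c4.pow 2)).div c2 hne).add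
      ((continuousAt_const.mul c2).mul (c3.pow 2))

lemma integrable_gg : IntegrableOn (gg S) (Ioo 0 S.T) := by
  obtain ⟨K, hK1, hK⟩ := exists_K S
  exact integrableOn_Ioo_of_bound (cont_gg S) (fun t ht => gg_bound S hK1 hK ht)

lemma mu_int_le {C₀ : ℝ} (hTD : S.TimeDiffEstimate C₀) {t : ℝ} (ht : t ∈ Ioo 0 S.T) :
    S.μ * ∫ s in Ioo (0:ℝ) t, gg S s ≤ S.E1 C₀ := by
  have h := hTD t ht
  have hA : 0 ≤ ∫ x in Ioo (0:ℝ) 1, x ^ 2 * S.ρ0 x * S.vt x t ^ 2 :=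
    setIntegral_nonneg measurableSet_Ioo (fun x hx => by
      have hρ := S.hρ0pos x ⟨hx.1.le, hx.2⟩
      positivity)
  have hcong : (∫ s in Ioo (0:ℝ) t, ∫ x in Ioo (0:ℝ) 1,
      (S.r x s ^ 2 * S.vxt x s ^ 2 / S.rx x s + 2 * S.rx x s * S.vt x s ^ 2))
      = ∫ s in Ioo (0:ℝ) t, gg S s := by
    refine setIntegral_congr_fun measurableSet_Ioo (fun s hs => ?_)
    refine setIntegral_congr_fun measurableSet_Ioo (fun x hx => ?_)
    exact DISS_eq S hx ⟨hs.1, lt_trans hs.2 ht.2⟩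
  rw [hcong] at h
  linarith [h, hA]

lemma int_gg_le {C₀ : ℝ} (hTD : S.TimeDiffEstimate C₀) :
    ∫ t in Ioo (0:ℝ) S.T, gg S t ≤ S.E1 C₀ / S.μ := by
  obtain ⟨K, hK1, hK⟩ := exists_K S
  have hα : (0:ℝ) < S.α := lt_trans one_pos S.hα
  have hK0 : (0:ℝ) < K := lt_of_lt_of_le one_pos hK1
  set KD : ℝ := S.α ^ 3 * K ^ 6 + 2 * K ^ 3 with hKD
  have hKD0 : 0 < KD := by positivity
  refine le_of_forall_pos_le_add (fun ε hε => ?_)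
  set t : ℝ := max (S.T / 2) (S.T - ε / KD) with htdef
  have ht0 : 0 < t := lt_of_lt_of_le (half_pos S.hT) (le_max_left _ _)
  have htT : t < S.T := max_lt (half_lt_self S.hT) (by
    have : 0 < ε / KD := div_pos hε hKD0
    linarith)
  have htI : t ∈ Ioo (0:ℝ) S.T := ⟨ht0, htT⟩
  have hsplit : Ioo (0:ℝ) S.T = Ioo 0 t ∪ Ico t S.T := (Ioo_union_Ico_eq_Ioo ht0 htT.le).symm
  have hdisj : Disjoint (Ioo (0:ℝ) t) (Ico t S.T) := by
    rw [Set.disjoint_left]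
    rintro a ⟨_, h2⟩ ⟨h3, _⟩
    exact absurd h3 (not_le.2 h2)
  have hint1 : IntegrableOn (gg S) (Ioo (0:ℝ) t) :=
    (integrable_gg S).mono_set (Ioo_subset_Ioo le_rfl htT.le)
  have hico : Ico t S.T ⊆ Ioo (0:ℝ) S.T := fun s hs => ⟨lt_of_lt_of_le ht0 hs.1, hs.2⟩
  have hint2 : IntegrableOn (gg S) (Ico t S.T) := (integrable_gg S).mono_set hico
  have heq : ∫ s in Ioo (0:ℝ) S.T, gg S s
      = (∫ s in Ioo (0:ℝ) t, gg S s) + ∫ s in Ico t S.T, gg S s := by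
    rw [hsplit]
    exact setIntegral_union hdisj measurableSet_Ico hint1 hint2
  have hpiece1 : ∫ s in Ioo (0:ℝ) t, gg S s ≤ S.E1 C₀ / S.μ := by
    have := mu_int_le S hTD htI
    rw [le_div_iff₀ S.hμ]
    linarith [this]
  have hpiece2 : ∫ s in Ico t S.T, gg S s ≤ ε := by
    have hnorm := norm_setIntegral_le_of_norm_le_const (μ := volume) (s := Ico t S.T)
      (f := gg S) (C := KD) measure_Ico_lt_top
      (fun s hs => by simpa [Real.norm_eq_abs] using gg_bound S hK1 hK (hico hs))
    have hvol : volume.real (Ico t S.T) = S.T - t := by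
      rw [Real.volume_real_Ico_of_le htT.le]
    rw [hvol, Real.norm_eq_abs] at hnorm
    have htail : S.T - t ≤ ε / KD := by
      have : S.T - ε / KD ≤ t := le_max_right _ _
      linarith
    calc ∫ s in Ico t S.T, gg S s ≤ |∫ s in Ico t S.T, gg S s| := le_abs_self _
      _ ≤ KD * (S.T - t) := hnorm
      _ ≤ KD * (ε / KD) := by
          exact mul_le_mul_of_nonneg_left htail hKD0.le
      _ = ε := mul_div_cancel₀ ε hKD0.ne'
  rw [heq]
  linarith [hpiece1, hpiece2]

lemma E1_nonneg {C₀ : ℝ} (hTD : S.TimeDiffEstimate C₀) : 0 ≤ S.E1 C₀ := by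
  have htmem : S.T / 2 ∈ Ioo (0:ℝ) S.T := ⟨half_pos S.hT, half_lt_self S.hT⟩
  have h := hTD (S.T / 2) htmem
  have hA : 0 ≤ ∫ x in Ioo (0:ℝ) 1, x ^ 2 * S.ρ0 x * S.vt x (S.T / 2) ^ 2 :=
    setIntegral_nonneg measurableSet_Ioo (fun x hx => by
      have hρ := S.hρ0pos x ⟨hx.1.le, hx.2⟩
      positivity)
  have hdbl : 0 ≤ ∫ s in Ioo (0:ℝ) (S.T / 2), ∫ x in Ioo (0:ℝ) 1,
      (S.r x s ^ 2 * S.vxt x s ^ 2 / S.rx x s + 2 * S.rx x s * S.vt x s ^ 2) := by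
    refine setIntegral_nonneg measurableSet_Ioo (fun s hs => ?_)
    refine setIntegral_nonneg measurableSet_Ioo (fun x hx => ?_)
    have hsT : s ∈ Ioo (0:ℝ) S.T := ⟨hs.1, lt_trans hs.2 (half_lt_self S.hT)⟩
    have hrx := rx_pos S hx hsT
    have h1 : 0 ≤ S.r x s ^ 2 * S.vxt x s ^ 2 / S.rx x s :=
      div_nonneg (by positivity) hrx.le
    have h2 : 0 ≤ 2 * S.rx x s * S.vt x s ^ 2 :=
      mul_nonneg (mul_nonneg (by norm_num) hrx.le) (sq_nonneg _)
    linarith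
  nlinarith [h, hA, hdbl, S.hμ]

end NSX

/-- **Boundary acceleration estimate, time-integrated.** There is `C > 0` depending only
on `ρ̄0, μ, λ, γ` such that `∫₀ᵀ (∂ₜv)(1,t)² dt ≤ CαE₁`,
where `E₁ = 𝓔₁ + C₀(α^{6γ}+β²)𝓔₀` with `C₀` the constant of the time-differentiated
energy estimate. -/
theorem boundary_acceleration_estimate (ρbar μ lam γ : ℝ) :
    ∃ C : ℝ, 0 < C ∧
      ∀ S : NS, S.ρbar = ρbar → S.μ = μ → S.lam = lam → S.γ = γ →
        ∀ C₀ : ℝ, 0 < C₀ → S.TimeDiffEstimate C₀ →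
          (∫ t in Ioo (0:ℝ) S.T, S.vt 1 t ^ 2) ≤ C * S.α * S.E1 C₀ := by
  refine ⟨max 1 (2 / μ), lt_of_lt_of_le one_pos (le_max_left _ _), ?_⟩
  intro S hρ hμ hlm hγ C₀ hC₀ hTD
  subst hμ
  obtain ⟨K, hK1, hK⟩ := NSX.exists_K S
  have hα : (0:ℝ) < S.α := lt_trans one_pos S.hα
  have hE1 : 0 ≤ S.E1 C₀ := NSX.E1_nonneg S hTD
  -- integrability of the boundary trace
  have hVTc : ContinuousOn (fun t => NSX.VT S 1 t) (Ioo (0:ℝ) S.T) := by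
    have hcurve : ContinuousOn (fun t : ℝ => ((1 : ℝ), t)) (Ioo (0:ℝ) S.T) :=
      (continuous_const.prodMk continuous_id).continuousOn
    exact (NSX.cont_VT S).comp hcurve
      (fun t htm => ⟨right_mem_Icc.2 zero_le_one, Ioo_subset_Icc_self htm⟩)
  have hVTint : IntegrableOn (fun t => NSX.VT S 1 t ^ 2) (Ioo (0:ℝ) S.T) := by
    refine NSX.integrableOn_Ioo_of_bound (hVTc.pow 2) (C := K ^ 2) (fun t htm => ?_)
    have hb : |NSX.VT S 1 t| ≤ K :=
      (hK (1, t) ⟨right_mem_Icc.2 zero_le_one, Ioo_subset_Icc_self htm⟩).2.2.1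
    rw [abs_of_nonneg (sq_nonneg _)]
    exact NSX.sq_le_of_abs_le hb
  -- main chain
  have hcong : (∫ t in Ioo (0:ℝ) S.T, S.vt 1 t ^ 2)
      = ∫ t in Ioo (0:ℝ) S.T, NSX.VT S 1 t ^ 2 :=
    setIntegral_congr_fun measurableSet_Ioo (fun t htm => by
      rw [NSX.vt_eq S (right_mem_Icc.2 zero_le_one) htm])
  have hmono : (∫ t in Ioo (0:ℝ) S.T, NSX.VT S 1 t ^ 2)
      ≤ ∫ t in Ioo (0:ℝ) S.T, 2 * S.α * NSX.gg S t := by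
    refine setIntegral_mono_on hVTint ((NSX.integrable_gg S).const_mul (2 * S.α))
      measurableSet_Ioo (fun t htm => ?_)
    exact NSX.pointwise_bd S hK1 hK htm
  have hfinal : (∫ t in Ioo (0:ℝ) S.T, 2 * S.α * NSX.gg S t)
      ≤ 2 * S.α * (S.E1 C₀ / S.μ) := by
    rw [integral_const_mul]
    exact mul_le_mul_of_nonneg_left (NSX.int_gg_le S hTD) (by positivity)
  have hchain : (∫ t in Ioo (0:ℝ) S.T, S.vt 1 t ^ 2) ≤ 2 / S.μ * S.α * S.E1 C₀ := by
    rw [hcong]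
    refine le_trans hmono (le_trans hfinal (le_of_eq ?_))
    field_simp
  refine le_trans hchain ?_
  have hle : 2 / S.μ ≤ max 1 (2 / S.μ) := le_max_right _ _
  nlinarith [mul_nonneg hα.le hE1, hle]
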